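/- arXiv:math/0508124 — 3 statements merged into one kernel-verified Lean document; each statement's English description precedes it below -/
import Mathlib

section
/- For the Laplace operator Δ on polynomials in three variables and Q = x² + y² + z², if T is a homogeneous polynomial of degree d-2 and Q·T is harmonic (Δ(Q·T) = 0), then T = 0. Consequently, the space of harmonic homogeneous polynomials of degree d intersects the space of polynomials divisible by Q only in {0}. -/
/-!
For `T` homogeneous of degree `k` in `n` variables, `Δ(Q·T) = Q·ΔT + (4k + 2n)·T`, so
`Δ(Q·T) = 0` is a relation `Q·ΔT + c·T = 0` with `c > 0`. Applying `Δ` to such a relation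
yields one of the same shape for `ΔT`, of degree `k - 2` and with a larger constant.
Descending on the degree, `ΔT` vanishes, and then `c·T = 0` forces `T = 0`.
-/

open MvPolynomial

/-- The Laplace operator on polynomials in three variables. -/
noncomputable def lap (P : MvPolynomial (Fin 3) ℂ) : MvPolynomial (Fin 3) ℂ :=
  ∑ i : Fin 3, pderiv i (pderiv i P)

namespace MvPolynomial

variable {σ R : Type*} [CommSemiring R]

instance [IsAddTorsionFree R] : IsAddTorsionFree (MvPolynomial σ R) :=
  ⟨fun _ hn _ _ h => ext _ _ fun v => nsmul_right_injective hn <| by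
    simpa only [coeff_smul] using congr(coeff v $h)⟩

lemma IsHomogeneous.pderiv_eq_zero_of_degree_zero {T : MvPolynomial σ R} (hT : T.IsHomogeneous 0)
    (i : σ) : pderiv i T = 0 := by
  obtain rfl | hT0 := eq_or_ne T 0
  · exact map_zero _
  · rw [totalDegree_eq_zero_iff_eq_C.mp (hT.totalDegree hT0), pderiv_C]

variable [Fintype σ]

noncomputable def laplacian : MvPolynomial σ R →ₗ[R] MvPolynomial σ R :=
  ∑ i, (pderiv i).toLinearMap ∘ₗ (pderiv i).toLinearMap

lemma laplacian_apply (P : MvPolynomial σ R) : laplacian P = ∑ i, pderiv i (pderiv i P) := by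
  simp [laplacian, LinearMap.sum_apply]

noncomputable def sumSquares : MvPolynomial σ R := ∑ i, X i ^ 2

lemma pderiv_sumSquares (i : σ) : pderiv i (sumSquares : MvPolynomial σ R) = 2 * X i := by
  classical
  simp [sumSquares, pderiv_X, Pi.single_apply, mul_comm]

lemma isHomogeneous_laplacian {k : ℕ} {T : MvPolynomial σ R} (hT : T.IsHomogeneous k) :
    (laplacian T).IsHomogeneous (k - 2) := by
  rw [laplacian_apply]
  exact IsHomogeneous.sum _ _ _ fun _ _ => hT.pderiv.pderiv

lemma IsHomogeneous.laplacian_eq_zero {k : ℕ} {T : MvPolynomial σ R} (hT : T.IsHomogeneous k)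
    (hk : k < 2) : laplacian T = 0 := by
  rw [laplacian_apply]
  refine Finset.sum_eq_zero fun i _ => ?_
  interval_cases k
  · rw [hT.pderiv_eq_zero_of_degree_zero, map_zero]
  · exact hT.pderiv.pderiv_eq_zero_of_degree_zero i

lemma laplacian_sumSquares_mul {k : ℕ} {T : MvPolynomial σ R} (hT : T.IsHomogeneous k) :
    laplacian (sumSquares * T) =
      sumSquares * laplacian T + (4 * k + 2 * Fintype.card σ) • T := by
  have h2 (i : σ) : pderiv i (2 : MvPolynomial σ R) = 0 := mod_cast (pderiv i).map_natCast 2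
  have hi (i : σ) : pderiv i (pderiv i (sumSquares * T)) =
      sumSquares * pderiv i (pderiv i T) + 4 * (X i * pderiv i T) + 2 * T := by
    simp only [Derivation.leibniz, pderiv_sumSquares, map_add, smul_eq_mul, pderiv_X_self, h2]
    ring
  simp only [laplacian_apply, hi, Finset.sum_add_distrib, ← Finset.mul_sum,
    hT.sum_X_mul_pderiv, Finset.sum_const, Finset.card_univ, nsmul_eq_mul]
  push_cast
  ring

theorem IsHomogeneous.eq_zero_of_sumSquares_mul_laplacian_add_nsmul_eq_zero
    [IsAddTorsionFree R] {k n : ℕ} {T : MvPolynomial σ R} (hT : T.IsHomogeneous k) (hn : n ≠ 0)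
    (h : sumSquares * laplacian T + n • T = 0) : T = 0 := by
  induction k using Nat.strong_induction_on generalizing n T with
  | _ k ih =>
  suffices laplacian T = 0 by
    rwa [this, mul_zero, zero_add, nsmul_eq_zero_iff_right hn] at h
  obtain hk | hk := lt_or_ge k 2
  · exact hT.laplacian_eq_zero hk
  · have hΔ := congr(laplacian $h)
    rw [map_add, map_nsmul, map_zero, laplacian_sumSquares_mul (isHomogeneous_laplacian hT),
      add_assoc, ← add_smul] at hΔ
    exact ih (k - 2) (by omega) (isHomogeneous_laplacian hT) (by omega) hΔ

theorem IsHomogeneous.eq_zero_of_laplacian_sumSquares_mul_eq_zero [Nonempty σ]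
    [IsAddTorsionFree R] {k : ℕ} {T : MvPolynomial σ R} (hT : T.IsHomogeneous k)
    (h : laplacian (sumSquares * T) = 0) : T = 0 := by
  rw [laplacian_sumSquares_mul hT] at h
  exact hT.eq_zero_of_sumSquares_mul_laplacian_add_nsmul_eq_zero
    (by have := Fintype.card_pos (α := σ); omega) h

end MvPolynomial

/-- For `Q = x² + y² + z²`: if `T` is homogeneous and `Q·T` is harmonic then `T = 0`;
consequently harmonic homogeneous polynomials of degree `d` meet `Q·V(d-2)` only in `0`. -/
theorem harmonic_inter_QV_eq_zero :
    (∀ (k : ℕ) (T : MvPolynomial (Fin 3) ℂ), T.IsHomogeneous k →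
      lap ((X (0 : Fin 3) ^ 2 + X 1 ^ 2 + X 2 ^ 2) * T) = 0 → T = 0) ∧
    (∀ (d : ℕ) (P T : MvPolynomial (Fin 3) ℂ), P.IsHomogeneous d → lap P = 0 →
      T.IsHomogeneous (d - 2) →
      P = (X (0 : Fin 3) ^ 2 + X 1 ^ 2 + X 2 ^ 2) * T → P = 0) := by
  have hQ : (X 0 ^ 2 + X 1 ^ 2 + X 2 ^ 2 : MvPolynomial (Fin 3) ℂ) = sumSquares := by
    simp [sumSquares, Fin.sum_univ_three]
  have hlap (P : MvPolynomial (Fin 3) ℂ) : lap P = laplacian P := (laplacian_apply P).symm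
  have harmonic_mul : ∀ (k : ℕ) (T : MvPolynomial (Fin 3) ℂ), T.IsHomogeneous k →
      lap ((X (0 : Fin 3) ^ 2 + X 1 ^ 2 + X 2 ^ 2) * T) = 0 → T = 0 := fun _ _ hT h => by
    rw [hQ, hlap] at h
    exact hT.eq_zero_of_laplacian_sumSquares_mul_eq_zero h
  refine ⟨harmonic_mul, fun _ P T _ hP hT hPT => ?_⟩
  rw [hPT, harmonic_mul _ T hT (hPT ▸ hP), mul_zero]
end

section
/- Every nonzero homogeneous polynomial function of degree d on the complex projective conic {Q = 0} (i.e., every nonzero element of V(d)/Q·V(d−2) for Q an irreducible quadratic form in three variables) is represented by a product of d linear forms. Equivalently, the restriction map from completely factorable degree-d homogeneous polynomials to V(d)/Q·V(d−2) is surjective onto the nonzero elements. -/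
/-!
Projecting the conic `Q = 0` from one of its points `p` parametrizes it by a triple `ψ` of binary
quadratic forms. Since `Q` is irreducible, `p` is a smooth point (at a singular point `Q` would be
a cone over a binary quadric, i.e. a pair of lines), so `ψ` reaches every point of the conic off
the tangent line at `p`; by the Nullstellensatz the kernel of `f ↦ f ∘ ψ` is then `(Q)`.
In particular `ℓ ↦ ℓ ∘ ψ` is injective on the three-dimensional space of ternary linear forms,
hence onto the (at most) three-dimensional space of binary quadratic forms.

Now `P ∘ ψ` is a binary form of degree `2d`, so it splits into `2d` linear factors; grouping them
in pairs writes it as a product of `d` binary quadratics `ℓⱼ ∘ ψ`, and `P - ∏ ℓⱼ` lies in the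
kernel `(Q)`.
-/

open MvPolynomial

namespace MvPolynomial

variable {σ τ R : Type*}

theorem eval_aeval [CommSemiring R] (x : τ → R) (g : σ → MvPolynomial τ R)
    (F : MvPolynomial σ R) : eval x (aeval g F) = eval (fun i => eval x (g i)) F := by
  rw [← coe_aeval_eq_eval, aeval_eq_bind₁]
  exact aeval_bind₁ x g F

theorem IsHomogeneous.not_isUnit [CommSemiring R] [Nontrivial R] {F : MvPolynomial σ R} {n : ℕ}
    (hF : F.IsHomogeneous n) (hn : n ≠ 0) : ¬ IsUnit F := by
  intro hu
  have h0 : constantCoeff F = 0 := by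
    rw [constantCoeff_eq]
    exact hF.coeff_eq_zero (by simpa using hn.symm)
  simpa [h0] using hu.map constantCoeff

theorem IsHomogeneous.not_dvd [CommSemiring R] [NoZeroDivisors R] {F G : MvPolynomial σ R}
    {m n : ℕ} (hF : F.IsHomogeneous m) (hG : G.IsHomogeneous n) (hG0 : G ≠ 0) (hnm : n < m) :
    ¬ F ∣ G := by
  rintro ⟨H, rfl⟩
  have hF0 : F ≠ 0 := by rintro rfl; simp at hG0
  have hH0 : H ≠ 0 := by rintro rfl; simp at hG0
  have := totalDegree_mul_of_isDomain hF0 hH0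
  rw [hG.totalDegree hG0, hF.totalDegree hF0] at this
  omega

theorem dvd_of_forall_eval_eq_zero {K : Type*} [Field K] [IsAlgClosed K] [Finite σ]
    {Q G : MvPolynomial σ K} (hQ : Prime Q) (h : ∀ v, eval v Q = 0 → eval v G = 0) : Q ∣ G := by
  have hprime : (Ideal.span {Q}).IsPrime := (Ideal.span_singleton_prime hQ.ne_zero).mpr hQ
  rw [← Ideal.mem_span_singleton, ← hprime.radical,
    ← vanishingIdeal_zeroLocus_eq_radical (K := K), mem_vanishingIdeal_iff]
  intro v hv
  rw [mem_zeroLocus_iff] at hv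
  simpa using h v (by simpa using hv Q (Ideal.mem_span_singleton_self Q))

section CommRing

variable [CommRing R]

theorem IsHomogeneous.exists_linearMap_eq_eval {L : MvPolynomial σ R} (hL : L.IsHomogeneous 1) :
    ∃ ℓ : (σ → R) →ₗ[R] R, ∀ v, ℓ v = eval v L := by
  have hmem : L ∈ Submodule.span R (Set.range X) := by
    rw [← homogeneousSubmodule_one_eq_span_X]
    exact hL
  clear hL
  induction hmem using Submodule.span_induction with
  | mem _ h =>
    obtain ⟨i, rfl⟩ := h
    exact ⟨LinearMap.proj i, fun v => by simp⟩
  | zero => exact ⟨0, by simp⟩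
  | add _ _ _ _ h₁ h₂ =>
    obtain ⟨ℓ₁, h₁⟩ := h₁
    obtain ⟨ℓ₂, h₂⟩ := h₂
    exact ⟨ℓ₁ + ℓ₂, by simp [h₁, h₂]⟩
  | smul c _ _ h =>
    obtain ⟨ℓ, h⟩ := h
    exact ⟨c • ℓ, by simp [h]⟩

theorem IsHomogeneous.exists_quadraticMap_eq_eval {Q : MvPolynomial σ R}
    (hQ : Q.IsHomogeneous 2) : ∃ q : QuadraticMap R (σ → R) R, ∀ v, q v = eval v Q := by
  have hmem : Q ∈ homogeneousSubmodule σ R 1 * homogeneousSubmodule σ R 1 := by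
    rw [← pow_two, homogeneousSubmodule_one_pow]
    exact hQ
  refine Submodule.mul_induction_on hmem (fun F hF G hG => ?_) (fun F G hF hG => ?_)
  · obtain ⟨ℓ₁, h₁⟩ := IsHomogeneous.exists_linearMap_eq_eval hF
    obtain ⟨ℓ₂, h₂⟩ := IsHomogeneous.exists_linearMap_eq_eval hG
    exact ⟨QuadraticMap.linMulLin ℓ₁ ℓ₂, by simp [h₁, h₂]⟩
  · obtain ⟨q₁, h₁⟩ := hF
    obtain ⟨q₂, h₂⟩ := hG
    exact ⟨q₁ + q₂, by simp [h₁, h₂]⟩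

theorem exists_isHomogeneous_one_eval_eq [Fintype σ] (ℓ : (σ → R) →ₗ[R] R) :
    ∃ L : MvPolynomial σ R, L.IsHomogeneous 1 ∧ ∀ v, eval v L = ℓ v := by
  classical
  refine ⟨∑ i, C (ℓ (Pi.single i 1)) * X i,
    IsHomogeneous.sum _ _ _ fun i _ => isHomogeneous_C_mul_X _ i, fun v => ?_⟩
  conv_rhs => rw [pi_eq_sum_univ' v]
  simp [mul_comm]

end CommRing

end MvPolynomial

namespace QuadraticMap

variable {K V : Type*} [Field K] [AddCommGroup V] [Module K V] (q : QuadraticForm K V) {p : V}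

/-- For `q p = 0`, the second point in which the line through `p` and `u` meets `q = 0`. -/
def secondIntersection (p u : V) : V := q u • p - polar q p u • u

theorem secondIntersection_smul (p u : V) (c : K) :
    secondIntersection q p (c • u) = c ^ 2 • secondIntersection q p u := by
  simp only [secondIntersection, QuadraticMap.map_smul, polar_smul_right, smul_eq_mul, smul_sub,
    smul_smul]
  ring_nf

theorem secondIntersection_add_smul (hp : q p = 0) (u : V) (t : K) :
    secondIntersection q p (u + t • p) = secondIntersection q p u := by
  have hq : q (u + t • p) = q u + t * polar q p u := by
    rw [QuadraticMap.map_add (⇑q), QuadraticMap.map_smul, hp, polar_smul_right, polar_comm]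
    simp
  have hpolar : polar q p (u + t • p) = polar q p u := by
    rw [polar_add_right, polar_smul_right, polar_self, hp]
    simp
  simp only [secondIntersection, hq, hpolar]
  module

theorem exists_secondIntersection_smul_eq [IsAlgClosed K] (hp : q p = 0) {v : V} (hv : q v = 0)
    (hpv : polar q p v ≠ 0) (t : K) : ∃ c : K, secondIntersection q p (c • (v + t • p)) = v := by
  obtain ⟨c, hc⟩ := IsAlgClosed.exists_pow_nat_eq (-(polar q p v)⁻¹) two_pos
  refine ⟨c, ?_⟩
  rw [secondIntersection_smul, secondIntersection_add_smul q hp, secondIntersection, hv, hc]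
  simp [smul_smul, hpv]

end QuadraticMap

namespace Polynomial

variable {K : Type*} [Field K] [IsAlgClosed K]

theorem exists_mul_of_natDegree_le_succ {f : K[X]} {n : ℕ} (hf : f.natDegree ≤ n + 1) :
    ∃ a g : K[X], f = a * g ∧ a.natDegree ≤ 1 ∧ g.natDegree ≤ n := by
  by_cases h0 : f.natDegree = 0
  · exact ⟨1, f, (one_mul f).symm, by simp, by omega⟩
  obtain ⟨r, hr⟩ := IsAlgClosed.exists_root f (natDegree_pos_iff_degree_pos.mp (by omega)).ne'
  refine ⟨X - C r, f /ₘ (X - C r), (mul_divByMonic_eq_iff_isRoot.mpr hr).symm, by simp, ?_⟩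
  rw [natDegree_divByMonic f (monic_X_sub_C r), natDegree_X_sub_C]
  omega

theorem exists_homogenize_eq_prod (n : ℕ) {f : K[X]} (hf : f.natDegree ≤ n + 1) :
    ∃ L : Fin (n + 1) → MvPolynomial (Fin 2) K,
      (∀ i, (L i).IsHomogeneous 1) ∧ f.homogenize (n + 1) = ∏ i, L i := by
  induction n generalizing f with
  | zero => exact ⟨fun _ => f.homogenize 1, fun _ => isHomogeneous_homogenize f, by simp⟩
  | succ n ih =>
    obtain ⟨a, g, rfl, ha, hg⟩ := exists_mul_of_natDegree_le_succ hf
    obtain ⟨L, hL, hgL⟩ := ih hg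
    refine ⟨Fin.cons (a.homogenize 1) L, fun i => ?_, ?_⟩
    · cases i using Fin.cases <;> simp [hL, isHomogeneous_homogenize]
    · rw [Fin.prod_univ_succ, Fin.cons_zero]
      simp only [Fin.cons_succ]
      rw [← hgL, ← homogenize_mul a g ha hg, add_comm]

end Polynomial

namespace MvPolynomial.IsHomogeneous

theorem natDegree_aeval_X_one_le {R : Type*} [CommSemiring R] {n : ℕ}
    {F : MvPolynomial (Fin 2) R} (hF : F.IsHomogeneous n) :
    (MvPolynomial.aeval ![(Polynomial.X : Polynomial R), 1] F).natDegree ≤ n := by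
  simpa using aeval_natDegree_le F hF.totalDegree_le ![(Polynomial.X : Polynomial R), 1]
    (n := 1) (fun i => by fin_cases i <;> simp [Polynomial.natDegree_X_le])

theorem exists_eq_prod_isHomogeneous_one {K : Type*} [Field K] [IsAlgClosed K]
    {F : MvPolynomial (Fin 2) K} {n : ℕ} (hF : F.IsHomogeneous n) (hn : n ≠ 0)
    {ι : Type*} [Fintype ι] (hι : Fintype.card ι = n) :
    ∃ L : ι → MvPolynomial (Fin 2) K, (∀ i, (L i).IsHomogeneous 1) ∧ F = ∏ i, L i := by
  obtain ⟨m, rfl⟩ := Nat.exists_eq_succ_of_ne_zero hn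
  obtain ⟨L, hL, hFL⟩ := Polynomial.exists_homogenize_eq_prod m hF.natDegree_aeval_X_one_le
  rw [Polynomial.homogenize_eq_of_isHomogeneous hF rfl] at hFL
  let e := Fintype.equivFinOfCardEq hι
  exact ⟨L ∘ e, fun i => hL _, by rw [hFL]; exact (e.prod_comp L).symm⟩

end MvPolynomial.IsHomogeneous

namespace MvPolynomial

variable {R K : Type*} {n m : ℕ}

section Hyperplane

variable [CommSemiring R]

noncomputable def restrictHyperplane (k : Fin (n + 1)) :
    MvPolynomial (Fin (n + 1)) R →ₐ[R] MvPolynomial (Fin n) R :=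
  aeval (Fin.insertNth k 0 X)

theorem eval_restrictHyperplane (k : Fin (n + 1)) (x : Fin n → R)
    (F : MvPolynomial (Fin (n + 1)) R) :
    eval x (restrictHyperplane k F) = eval (Fin.insertNth k 0 x) F := by
  rw [restrictHyperplane, eval_aeval]
  congr 2
  funext i
  cases i using Fin.succAboveCases k <;> simp

theorem IsHomogeneous.restrictHyperplane {F : MvPolynomial (Fin (n + 1)) R}
    (hF : F.IsHomogeneous m) (k : Fin (n + 1)) : (restrictHyperplane k F).IsHomogeneous m := by
  rw [MvPolynomial.restrictHyperplane]
  simpa only [one_mul] using hF.aeval _ (n := 1) fun i => by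
    cases i using Fin.succAboveCases k <;> simp [isHomogeneous_X, isHomogeneous_zero]

theorem aeval_removeNth_restrictHyperplane {A : Type*} [CommSemiring A] [Algebra R A]
    {k : Fin (n + 1)} {τ : Fin (n + 1) → A} (hτ : τ k = 0) (F : MvPolynomial (Fin (n + 1)) R) :
    aeval (Fin.removeNth k τ) (restrictHyperplane k F) = aeval τ F := by
  rw [restrictHyperplane, ← AlgHom.comp_apply, comp_aeval]
  congr 2
  funext i
  cases i using Fin.succAboveCases k <;> simp [hτ, Fin.removeNth]

end Hyperplane

theorem IsHomogeneous.exists_ne_zero_eval_eq_zero [Field K] [IsAlgClosed K]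
    {F : MvPolynomial (Fin (n + 2)) K} (hF : F.IsHomogeneous m) (hm : m ≠ 0) :
    ∃ x ≠ 0, eval x F = 0 := by
  induction n with
  | zero =>
    obtain ⟨L, hL, rfl⟩ := hF.exists_eq_prod_isHomogeneous_one hm (ι := Fin m) (Fintype.card_fin m)
    obtain ⟨ℓ, hℓ⟩ := (hL ⟨0, by omega⟩).exists_linearMap_eq_eval
    obtain ⟨x, hx, hx0⟩ := (Submodule.ne_bot_iff _).mp (ℓ.ker_ne_bot_of_finrank_lt (by simp))
    refine ⟨x, hx0, ?_⟩
    rw [map_prod]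
    exact Finset.prod_eq_zero (Finset.mem_univ ⟨0, by omega⟩) (by rw [← hℓ]; exact hx)
  | succ n ih =>
    obtain ⟨x, hx0, hx⟩ := ih (hF.restrictHyperplane 0)
    refine ⟨Fin.insertNth 0 0 x, fun h => hx0 ?_, by rwa [← eval_restrictHyperplane]⟩
    funext j
    simpa using congrFun h j.succ

theorem finrank_homogeneousSubmodule_fin_two_le (K : Type*) [Field K] (n : ℕ) :
    Module.finrank K (homogeneousSubmodule (Fin 2) K n) ≤ n + 1 := by
  have : FiniteDimensional K (Polynomial.degreeLT K (n + 1)) :=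
    (Polynomial.degreeLTEquiv K (n + 1)).symm.finiteDimensional
  have hle : homogeneousSubmodule (Fin 2) K n ≤
      (Polynomial.degreeLT K (n + 1)).map (Polynomial.homogenizeLM n) := fun F hF =>
    ⟨aeval ![Polynomial.X, 1] F, Polynomial.mem_degreeLT.mpr <|
      (Polynomial.degree_le_of_natDegree_le hF.natDegree_aeval_X_one_le).trans_lt
        (by exact_mod_cast n.lt_succ_self),
      Polynomial.homogenize_eq_of_isHomogeneous hF rfl⟩
  calc _ ≤ _ := Submodule.finrank_mono hle
    _ ≤ _ := Submodule.finrank_map_le _ _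
    _ = n + 1 := by simp [(Polynomial.degreeLTEquiv K (n + 1)).finrank_eq]

theorem exists_isHomogeneous_one_aeval_eq [Field K] {ψ : Fin 3 → MvPolynomial (Fin 2) K}
    (hψ : ∀ i, (ψ i).IsHomogeneous 2)
    (hinj : ∀ L : MvPolynomial (Fin 3) K, L.IsHomogeneous 1 → aeval ψ L = 0 → L = 0)
    {G : MvPolynomial (Fin 2) K} (hG : G.IsHomogeneous 2) :
    ∃ L : MvPolynomial (Fin 3) K, L.IsHomogeneous 1 ∧ aeval ψ L = G := by
  have hli : LinearIndependent K ψ := by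
    have := (linearIndependent_X (Fin 3) K).map (f := (aeval ψ).toLinearMap) ?_
    · simpa [Function.comp_def] using this
    rw [Submodule.disjoint_def, ← homogeneousSubmodule_one_eq_span_X]
    exact hinj
  have : FiniteDimensional K (homogeneousSubmodule (Fin 2) K 2) :=
    Module.Finite.iff_fg.mpr (homogeneousSubmodule_fg (Fin 2) K 2)
  have hspan : Submodule.span K (Set.range ψ) = homogeneousSubmodule (Fin 2) K 2 := by
    refine Submodule.eq_of_le_of_finrank_le
      (Submodule.span_le.mpr (Set.range_subset_iff.mpr hψ)) ?_
    rw [finrank_span_eq_card hli, Fintype.card_fin]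
    exact finrank_homogeneousSubmodule_fin_two_le K 2
  have hG' : G ∈ Submodule.span K (Set.range ψ) := by
    rw [hspan]
    exact hG
  obtain ⟨c, rfl⟩ := (Submodule.mem_span_range_iff_exists_fun K).mp hG'
  exact ⟨∑ i, C (c i) * X i, IsHomogeneous.sum _ _ _ fun i _ => isHomogeneous_C_mul_X _ i,
    by simp [Algebra.smul_def]⟩

end MvPolynomial

section Quadric

variable {K : Type*} [Field K] [IsAlgClosed K]

open QuadraticMap

theorem QuadraticMap.exists_secondIntersection_insertNth_eq {n : ℕ}
    {q : QuadraticForm K (Fin (n + 1) → K)} {p v : Fin (n + 1) → K} {k : Fin (n + 1)}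
    (hp : q p = 0) (hk : p k ≠ 0) (hv : q v = 0) (hpv : polar q p v ≠ 0) :
    ∃ x : Fin n → K, secondIntersection q p (Fin.insertNth k 0 x) = v := by
  obtain ⟨c, hc⟩ := q.exists_secondIntersection_smul_eq hp hv hpv (-(v k / p k))
  refine ⟨Fin.removeNth k (c • (v + (-(v k / p k)) • p)), ?_⟩
  have hk0 : (c • (v + (-(v k / p k)) • p)) k = 0 := by
    simp [hk]
  rwa [← hk0, Fin.insertNth_self_removeNth]

theorem exists_parametrization_of_polar_ne_zero {n : ℕ} {Q : MvPolynomial (Fin (n + 1)) K}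
    (hQ : Q.IsHomogeneous 2) (hprime : Prime Q) {q : QuadraticForm K (Fin (n + 1) → K)}
    (hq : ∀ v, q v = eval v Q) {p w : Fin (n + 1) → K} (hp : q p = 0) (hw : polar q p w ≠ 0) :
    ∃ ψ : Fin (n + 1) → MvPolynomial (Fin n) K,
      (∀ i, (ψ i).IsHomogeneous 2) ∧ ∀ f, aeval ψ f = 0 → Q ∣ f := by
  have hp0 : p ≠ 0 := by
    rintro rfl
    exact hw (polar_zero_left _ _)
  obtain ⟨k, hk⟩ := Function.ne_iff.mp hp0
  obtain ⟨L, hL, hLp⟩ := exists_isHomogeneous_one_eval_eq (polarBilin q p)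
  have hL0 : L ≠ 0 := by
    rintro rfl
    exact hw (by rw [← polarBilin_apply_apply, ← hLp, map_zero])
  refine ⟨fun i => restrictHyperplane k (C (p i) * Q - L * X i), fun i =>
    (((isHomogeneous_C _ _).mul hQ).sub (hL.mul (isHomogeneous_X _ _))).restrictHyperplane k,
    fun f hf => ?_⟩
  -- The parametrization reaches every point of the quadric off the tangent hyperplane `L = 0`.
  have hfL : Q ∣ f * L := by
    refine dvd_of_forall_eval_eq_zero hprime fun v hv => ?_
    rw [← hq] at hv
    rw [eval_mul, hLp, polarBilin_apply_apply]
    by_cases hpv : polar q p v = 0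
    · rw [hpv, mul_zero]
    obtain ⟨x, rfl⟩ := exists_secondIntersection_insertNth_eq hp hk hv hpv
    have hψx : (fun i => eval x (restrictHyperplane k (C (p i) * Q - L * X i))) =
        secondIntersection q p (Fin.insertNth k 0 x) := by
      funext i
      simp [eval_restrictHyperplane, secondIntersection, hq, hLp, mul_comm]
    rw [← hψx, ← eval_aeval, hf, map_zero, zero_mul]
  exact (hprime.dvd_or_dvd hfL).resolve_right (hQ.not_dvd hL hL0 one_lt_two)

theorem exists_eq_mul_of_forall_polar_eq_zero {Q : MvPolynomial (Fin 3) K}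
    (hQ : Q.IsHomogeneous 2) {q : QuadraticForm K (Fin 3 → K)} (hq : ∀ v, q v = eval v Q)
    {p : Fin 3 → K} {k : Fin 3} (hp : q p = 0) (hk : p k ≠ 0) (hdeg : ∀ v, polar q p v = 0) :
    ∃ ℓ₁ ℓ₂ : MvPolynomial (Fin 3) K, ℓ₁.IsHomogeneous 1 ∧ ℓ₂.IsHomogeneous 1 ∧ Q = ℓ₁ * ℓ₂ := by
  set τ : Fin 3 → MvPolynomial (Fin 3) K := fun i => X i - C (p i / p k) * X k
  have hτ : ∀ i, (τ i).IsHomogeneous 1 := fun i =>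
    (isHomogeneous_X _ _).sub (isHomogeneous_C_mul_X _ _)
  have hτk : τ k = 0 := by simp [τ, hk]
  -- `Q` is constant along the lines through `p`, so it is unchanged by projecting from `p`.
  have hQτ : aeval τ Q = Q := MvPolynomial.funext fun v => by
    have hτv : (fun i => eval v (τ i)) = v + (-(v k / p k)) • p := by
      funext i
      simp only [τ, map_sub, eval_X, map_mul, eval_C, neg_smul, Pi.add_apply, Pi.neg_apply,
        Pi.smul_apply, smul_eq_mul]
      ring
    rw [eval_aeval, hτv, ← hq, ← hq, QuadraticMap.map_add (⇑q), QuadraticMap.map_smul, hp,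
      polar_smul_right, polar_comm, hdeg]
    simp
  obtain ⟨ℓ, hℓ, hℓQ⟩ := (hQ.restrictHyperplane k).exists_eq_prod_isHomogeneous_one two_ne_zero
    (Fintype.card_fin 2)
  refine ⟨aeval (Fin.removeNth k τ) (ℓ 0), aeval (Fin.removeNth k τ) (ℓ 1),
    by simpa only [one_mul] using (hℓ 0).aeval (Fin.removeNth k τ) fun j => hτ _,
    by simpa only [one_mul] using (hℓ 1).aeval (Fin.removeNth k τ) fun j => hτ _, ?_⟩
  rw [← map_mul, ← Fin.prod_univ_two, ← hℓQ, aeval_removeNth_restrictHyperplane hτk, hQτ]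

theorem exists_polar_ne_zero_of_irreducible {Q : MvPolynomial (Fin 3) K}
    (hQ : Q.IsHomogeneous 2) (hirr : Irreducible Q) {q : QuadraticForm K (Fin 3 → K)}
    (hq : ∀ v, q v = eval v Q) : ∃ p, q p = 0 ∧ ∃ w, polar q p w ≠ 0 := by
  obtain ⟨p, hp0, hp⟩ := hQ.exists_ne_zero_eval_eq_zero (n := 1) two_ne_zero
  obtain ⟨k, hk⟩ := Function.ne_iff.mp hp0
  refine ⟨p, by rw [hq, hp], ?_⟩
  by_contra! hdeg
  obtain ⟨ℓ₁, ℓ₂, h₁, h₂, rfl⟩ :=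
    exists_eq_mul_of_forall_polar_eq_zero hQ hq (by rw [hq, hp]) hk hdeg
  exact (hirr.isUnit_or_isUnit rfl).elim (h₁.not_isUnit one_ne_zero) (h₂.not_isUnit one_ne_zero)

theorem MvPolynomial.IsHomogeneous.exists_parametrization_of_irreducible
    {Q : MvPolynomial (Fin 3) K} (hQ : Q.IsHomogeneous 2) (hirr : Irreducible Q) :
    ∃ ψ : Fin 3 → MvPolynomial (Fin 2) K,
      (∀ i, (ψ i).IsHomogeneous 2) ∧ ∀ f, MvPolynomial.aeval ψ f = 0 → Q ∣ f := by
  obtain ⟨q, hq⟩ := hQ.exists_quadraticMap_eq_eval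
  obtain ⟨p, hp, w, hw⟩ := exists_polar_ne_zero_of_irreducible hQ hirr hq
  exact exists_parametrization_of_polar_ne_zero hQ hirr.prime hq hp hw

end Quadric

theorem factorable_representative_on_conic_general (d : ℕ) (hd : 1 ≤ d)
    (Q : MvPolynomial (Fin 3) ℂ) (hQh : Q.IsHomogeneous 2) (hQirr : Irreducible Q)
    (P : MvPolynomial (Fin 3) ℂ) (hP : P.IsHomogeneous d) :
    ∃ L : Fin d → MvPolynomial (Fin 3) ℂ,
      (∀ i, (L i).IsHomogeneous 1) ∧ Q ∣ P - ∏ i, L i := by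
  obtain ⟨ψ, hψ, hker⟩ := hQh.exists_parametrization_of_irreducible hQirr
  have hinj : ∀ L : MvPolynomial (Fin 3) ℂ, L.IsHomogeneous 1 → aeval ψ L = 0 → L = 0 :=
    fun L hL h => by_contra fun hL0 => hQh.not_dvd hL hL0 one_lt_two (hker L h)
  obtain ⟨l, hl, hPl⟩ := (hP.aeval ψ hψ).exists_eq_prod_isHomogeneous_one (by omega)
    (ι := Fin d × Fin 2) (by simp [mul_comm])
  choose L hL hLψ using fun j =>
    exists_isHomogeneous_one_aeval_eq hψ hinj ((hl (j, 0)).mul (hl (j, 1)))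
  refine ⟨L, hL, hker _ ?_⟩
  simp only [map_sub, map_prod, hLψ, hPl, Fintype.prod_prod_type, Fin.prod_univ_two, sub_self]

/-- Every nonzero homogeneous polynomial function of degree `d ≥ 1` on the conic
`{Q = 0}` (i.e. every homogeneous `P` of degree `d` not divisible by the irreducible
quadratic form `Q`) is represented, modulo `Q`, by a product of `d` linear forms. -/
theorem factorable_representative_on_conic (d : ℕ) (hd : 1 ≤ d)
    (Q : MvPolynomial (Fin 3) ℂ) (hQh : Q.IsHomogeneous 2) (hQirr : Irreducible Q)
    (P : MvPolynomial (Fin 3) ℂ) (hP : P.IsHomogeneous d) (hPnd : ¬ Q ∣ P) :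
    ∃ L : Fin d → MvPolynomial (Fin 3) ℂ,
      (∀ i, (L i).IsHomogeneous 1) ∧ Q ∣ P - ∏ i, L i :=
  factorable_representative_on_conic_general d hd Q hQh hQirr P hP
end

section
/- Let Q be an irreducible homogeneous form of degree l > 2 in ℂ[x,y,z], and let ω = (d₁,...,d_s) be a partition of d with s ≥ 2 parts, each d_i ≥ l. Then the dimension of V(d)/Q·V(d−l) minus the sum over i of the dimensions of V(d_i)/Q·V(d_i−l), plus (s−1), equals ((s−1)/2)(l² − 3l + 2), which is strictly positive; hence the product map from tuples of residues to V(d)/Q·V(d−l) cannot be dominant. -/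
/-! Since `k ↦ (l/2)(2k − l + 3)` is affine in `k` with slope `l`, the linear parts cancel
along `d = Σ dᵢ` and only the `s − 1` surplus copies of the constant term `(l/2)(3 − l)`
survive; adding `s − 1` gives `((s−1)/2)(l − 1)(l − 2)`, positive once `l > 2` and `s > 1`. -/

open Finset

section
variable {K : Type*} [Field K] [CharZero K]

theorem sum_half_mul_two_mul_sub_add {ι : Type*} (t : Finset ι) (l : K) (x : ι → K) :
    ∑ i ∈ t, l / 2 * (2 * x i - l + 3) = l * ∑ i ∈ t, x i + #t * (l / 2 * (3 - l)) := by
  rw [mul_sum, ← nsmul_eq_mul, ← sum_const, ← sum_add_distrib]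
  refine sum_congr rfl fun i _ => ?_
  ring

theorem half_mul_sum_sub_sum_half_mul_add_card_sub_one {ι : Type*} [Fintype ι]
    (l : K) (x : ι → K) :
    l / 2 * (2 * ∑ i, x i - l + 3) - ∑ i, l / 2 * (2 * x i - l + 3) + (Fintype.card ι - 1)
      = (Fintype.card ι - 1) / 2 * (l ^ 2 - 3 * l + 2) := by
  rw [sum_half_mul_two_mul_sub_add, card_univ]
  ring

end

theorem half_mul_sq_sub_three_mul_add_two_pos {K : Type*} [Field K] [LinearOrder K]
    [IsStrictOrderedRing K] {s l : K} (hs : 1 < s) (hl : 2 < l) :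
    0 < (s - 1) / 2 * (l ^ 2 - 3 * l + 2) := by
  have hfactor : l ^ 2 - 3 * l + 2 = (l - 1) * (l - 2) := by ring
  rw [hfactor]
  have : 0 < s - 1 := sub_pos.2 hs
  have : 0 < l - 1 := by linarith
  have : 0 < l - 2 := sub_pos.2 hl
  positivity

theorem multipole_dimension_deficit_general (l s : ℕ) (hl : 2 < l) (hs : 2 ≤ s)
    (dd : Fin s → ℕ) (d : ℕ) (hd : d = ∑ i, dd i) :
    ((l : ℚ) / 2) * (2 * d - l + 3)
        - (∑ i, ((l : ℚ) / 2) * (2 * (dd i : ℚ) - l + 3)) + ((s : ℚ) - 1)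
      = (((s : ℚ) - 1) / 2) * ((l : ℚ) ^ 2 - 3 * l + 2) ∧
    0 < (((s : ℚ) - 1) / 2) * ((l : ℚ) ^ 2 - 3 * l + 2) ∧
    (∑ i, ((l : ℚ) / 2) * (2 * (dd i : ℚ) - l + 3)) - ((s : ℚ) - 1)
      < ((l : ℚ) / 2) * (2 * d - l + 3) := by
  have hidentity := half_mul_sum_sub_sum_half_mul_add_card_sub_one (l : ℚ) fun i => (dd i : ℚ)
  rw [Fintype.card_fin, ← Nat.cast_sum, ← hd] at hidentity
  have hpos : 0 < ((s : ℚ) - 1) / 2 * ((l : ℚ) ^ 2 - 3 * l + 2) :=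
    half_mul_sq_sub_three_mul_add_two_pos (by exact_mod_cast hs) (by exact_mod_cast hl)
  exact ⟨hidentity, hpos, by linarith⟩

/-- Dimension count for degree-`l > 2` forms `Q`: for a partition `d = Σ dᵢ` with
`s ≥ 2` parts, each `dᵢ ≥ l`, the codimension
`dim(V(d)/Q·V(d−l)) − Σᵢ dim(V(dᵢ)/Q·V(dᵢ−l)) + (s−1)` equals
`((s−1)/2)(l² − 3l + 2)`, which is strictly positive; hence the multipole space has
dimension strictly smaller than the target and the product map cannot be dominant. -/
theorem multipole_dimension_deficit (l s : ℕ) (hl : 2 < l) (hs : 2 ≤ s)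
    (dd : Fin s → ℕ) (hdi : ∀ i, l ≤ dd i) (d : ℕ) (hd : d = ∑ i, dd i) :
    ((l : ℚ) / 2) * (2 * d - l + 3)
        - (∑ i, ((l : ℚ) / 2) * (2 * (dd i : ℚ) - l + 3)) + ((s : ℚ) - 1)
      = (((s : ℚ) - 1) / 2) * ((l : ℚ) ^ 2 - 3 * l + 2) ∧
    0 < (((s : ℚ) - 1) / 2) * ((l : ℚ) ^ 2 - 3 * l + 2) ∧
    (∑ i, ((l : ℚ) / 2) * (2 * (dd i : ℚ) - l + 3)) - ((s : ℚ) - 1)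
      < ((l : ℚ) / 2) * (2 * d - l + 3) :=
  multipole_dimension_deficit_general l s hl hs dd d hd
end
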